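/- arXiv:2506.06863 — 3 statements merged into one kernel-verified Lean document; each statement's English description precedes it below -/
import Mathlib

section
/- Let a, d, Re ∈ ℝ with Re > 0, ν = 1/Re, and let u : ℝ³ × ℝ → ℝ³ be the Beltrami velocity field with components u₁ = −a e^{−d²t/Re} (e^{ax} sin(ay+dz) + e^{az} cos(ax+dy)), u₂ = −a e^{−d²t/Re} (e^{ay} sin(az+dx) + e^{ax} cos(ay+dz)), u₃ = −a e^{−d²t/Re} (e^{az} sin(ax+dy) + e^{ay} cos(az+dx)). Then the time derivative of the velocity cancels the diffusion term: for each component d' ∈ {1,2,3} and all (x,y,z,t), ∂u_{d'}/∂t = ν (∂²u_{d'}/∂x² + ∂²u_{d'}/∂y² + ∂²u_{d'}/∂z²). -/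
/-- First component of the Beltrami (Ethier–Steinman) velocity field. -/
noncomputable def belU1 (a d Re x y z t : ℝ) : ℝ :=
  -a * Real.exp (-(d ^ 2 * t) / Re) *
    (Real.exp (a * x) * Real.sin (a * y + d * z) +
     Real.exp (a * z) * Real.cos (a * x + d * y))

/-- Second component of the Beltrami (Ethier–Steinman) velocity field. -/
noncomputable def belU2 (a d Re x y z t : ℝ) : ℝ :=
  -a * Real.exp (-(d ^ 2 * t) / Re) *
    (Real.exp (a * y) * Real.sin (a * z + d * x) +
     Real.exp (a * x) * Real.cos (a * y + d * z))

/-- Third component of the Beltrami (Ethier–Steinman) velocity field. -/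
noncomputable def belU3 (a d Re x y z t : ℝ) : ℝ :=
  -a * Real.exp (-(d ^ 2 * t) / Re) *
    (Real.exp (a * z) * Real.sin (a * x + d * y) +
     Real.exp (a * y) * Real.cos (a * z + d * x))

/-- The Beltrami (Ethier–Steinman) pressure. -/
noncomputable def belP (a d Re x y z t : ℝ) : ℝ :=
  -(a ^ 2 / 2) * Real.exp (-(2 * d ^ 2 * t) / Re) *
    (Real.exp (2 * a * x) + Real.exp (2 * a * y) + Real.exp (2 * a * z) +
     2 * Real.sin (a * x + d * y) * Real.cos (a * z + d * x) * Real.exp (a * (y + z)) +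
     2 * Real.sin (a * y + d * z) * Real.cos (a * x + d * y) * Real.exp (a * (z + x)) +
     2 * Real.sin (a * z + d * x) * Real.cos (a * y + d * z) * Real.exp (a * (x + y)))


private lemma bel_hs (p q r s w : ℝ) :
    HasDerivAt (fun v : ℝ => Real.exp (p*v+q) * Real.sin (r*v+s))
      (p * (Real.exp (p*w+q) * Real.sin (r*w+s)) + r * (Real.exp (p*w+q) * Real.cos (r*w+s))) w := by
  have hl1 : HasDerivAt (fun v : ℝ => p*v+q) p w := by
    simpa using ((hasDerivAt_id w).const_mul p).add_const q
  have hl2 : HasDerivAt (fun v : ℝ => r*v+s) r w := by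
    simpa using ((hasDerivAt_id w).const_mul r).add_const s
  have h := (hl1.exp).mul (hl2.sin)
  exact h.congr_deriv (by ring)

private lemma bel_hc (p q r s w : ℝ) :
    HasDerivAt (fun v : ℝ => Real.exp (p*v+q) * Real.cos (r*v+s))
      (p * (Real.exp (p*w+q) * Real.cos (r*w+s)) - r * (Real.exp (p*w+q) * Real.sin (r*w+s))) w := by
  have hl1 : HasDerivAt (fun v : ℝ => p*v+q) p w := by
    simpa using ((hasDerivAt_id w).const_mul p).add_const q
  have hl2 : HasDerivAt (fun v : ℝ => r*v+s) r w := by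
    simpa using ((hasDerivAt_id w).const_mul r).add_const s
  have h := (hl1.exp).mul (hl2.cos)
  exact h.congr_deriv (by ring)

private lemma bel_master (E p1 q1 r1 s1 p2 q2 r2 s2 w : ℝ) :
    deriv (fun w' => deriv (fun v => E * (Real.exp (p1*v+q1) * Real.sin (r1*v+s1) +
        Real.exp (p2*v+q2) * Real.cos (r2*v+s2))) w') w
    = E * ((p1^2 - r1^2) * (Real.exp (p1*w+q1) * Real.sin (r1*w+s1)) +
        2*p1*r1 * (Real.exp (p1*w+q1) * Real.cos (r1*w+s1)) +
        ((p2^2 - r2^2) * (Real.exp (p2*w+q2) * Real.cos (r2*w+s2)) -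
          2*p2*r2 * (Real.exp (p2*w+q2) * Real.sin (r2*w+s2)))) := by
  have hf : ∀ u : ℝ, deriv (fun v => E * (Real.exp (p1*v+q1) * Real.sin (r1*v+s1) +
      Real.exp (p2*v+q2) * Real.cos (r2*v+s2))) u
      = E * ((p1 * (Real.exp (p1*u+q1) * Real.sin (r1*u+s1)) +
          r1 * (Real.exp (p1*u+q1) * Real.cos (r1*u+s1))) +
        (p2 * (Real.exp (p2*u+q2) * Real.cos (r2*u+s2)) -
          r2 * (Real.exp (p2*u+q2) * Real.sin (r2*u+s2)))) := by
    intro u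
    exact (((bel_hs p1 q1 r1 s1 u).add (bel_hc p2 q2 r2 s2 u)).const_mul E).deriv
  simp only [hf]
  have h2 : HasDerivAt (fun u : ℝ => E * ((p1 * (Real.exp (p1*u+q1) * Real.sin (r1*u+s1)) +
      r1 * (Real.exp (p1*u+q1) * Real.cos (r1*u+s1))) +
      (p2 * (Real.exp (p2*u+q2) * Real.cos (r2*u+s2)) -
        r2 * (Real.exp (p2*u+q2) * Real.sin (r2*u+s2)))))
      (E * ((p1^2 - r1^2) * (Real.exp (p1*w+q1) * Real.sin (r1*w+s1)) +
        2*p1*r1 * (Real.exp (p1*w+q1) * Real.cos (r1*w+s1)) +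
        ((p2^2 - r2^2) * (Real.exp (p2*w+q2) * Real.cos (r2*w+s2)) -
          2*p2*r2 * (Real.exp (p2*w+q2) * Real.sin (r2*w+s2))))) w := by
    have h := ((((bel_hs p1 q1 r1 s1 w).const_mul p1).add
        ((bel_hc p1 q1 r1 s1 w).const_mul r1)).add
        (((bel_hc p2 q2 r2 s2 w).const_mul p2).sub
        ((bel_hs p2 q2 r2 s2 w).const_mul r2))).const_mul E
    exact h.congr_deriv (by ring)
  exact h2.deriv

private lemma bel_time (C c Re K t : ℝ) :
    deriv (fun s : ℝ => C * Real.exp (-(c*s)/Re) * K) t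
      = (-c/Re) * (C * Real.exp (-(c*t)/Re) * K) := by
  have hl : HasDerivAt (fun s : ℝ => -(c*s)/Re) (-c/Re) t := by
    simpa using (((hasDerivAt_id t).const_mul c).neg.div_const Re)
  have h := ((hl.exp.const_mul C).mul_const K)
  have h2 : HasDerivAt (fun s : ℝ => C * Real.exp (-(c*s)/Re) * K)
      ((-c/Re) * (C * Real.exp (-(c*t)/Re) * K)) t := by
    exact h.congr_deriv (by ring)
  exact h2.deriv

private lemma bel_comp1 (a d Re ν : ℝ) (hRe : 0 < Re) (hν : ν = 1 / Re) (x y z t : ℝ) :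
    deriv (fun s => belU1 a d Re x y z s) t =
      ν * (deriv (fun x' => deriv (fun x'' => belU1 a d Re x'' y z t) x') x +
           deriv (fun y' => deriv (fun y'' => belU1 a d Re x y'' z t) y') y +
           deriv (fun z' => deriv (fun z'' => belU1 a d Re x y z'' t) z') z) := by
  have hx : (fun x'' => belU1 a d Re x'' y z t) =
      (fun v => (-a * Real.exp (-(d^2*t)/Re)) *
        (Real.exp (a*v+0) * Real.sin (0*v+(a*y+d*z)) +
         Real.exp (0*v+a*z) * Real.cos (a*v+(d*y)))) := by
    funext v; simp only [belU1]; ring_nf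
  have hy : (fun y'' => belU1 a d Re x y'' z t) =
      (fun v => (-a * Real.exp (-(d^2*t)/Re)) *
        (Real.exp (0*v+a*x) * Real.sin (a*v+(d*z)) +
         Real.exp (0*v+a*z) * Real.cos (d*v+(a*x)))) := by
    funext v; simp only [belU1]; ring_nf
  have hz : (fun z'' => belU1 a d Re x y z'' t) =
      (fun v => (-a * Real.exp (-(d^2*t)/Re)) *
        (Real.exp (0*v+a*x) * Real.sin (d*v+(a*y)) +
         Real.exp (a*v+0) * Real.cos (0*v+(a*x+d*y)))) := by
    funext v; simp only [belU1]; ring_nf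
  rw [hx, hy, hz, bel_master, bel_master, bel_master]
  simp only [belU1]
  rw [bel_time]
  subst hν
  field_simp
  ring

private lemma belU2_eq (a d Re x y z t : ℝ) : belU2 a d Re x y z t = belU1 a d Re y z x t := by
  simp [belU1, belU2]

private lemma belU3_eq (a d Re x y z t : ℝ) : belU3 a d Re x y z t = belU1 a d Re z x y t := by
  simp [belU1, belU3]

/-- For the Beltrami flow, the time derivative of the velocity cancels the
diffusion term: `∂u_d'/∂t = ν (∂²u_d'/∂x² + ∂²u_d'/∂y² + ∂²u_d'/∂z²)`
for each component `d' ∈ {1,2,3}`. -/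
theorem beltrami_time_deriv_eq_diffusion (a d Re ν : ℝ) (hRe : 0 < Re)
    (hν : ν = 1 / Re) (x y z t : ℝ) :
    (deriv (fun s => belU1 a d Re x y z s) t =
      ν * (deriv (fun x' => deriv (fun x'' => belU1 a d Re x'' y z t) x') x +
           deriv (fun y' => deriv (fun y'' => belU1 a d Re x y'' z t) y') y +
           deriv (fun z' => deriv (fun z'' => belU1 a d Re x y z'' t) z') z)) ∧
    (deriv (fun s => belU2 a d Re x y z s) t =
      ν * (deriv (fun x' => deriv (fun x'' => belU2 a d Re x'' y z t) x') x +
           deriv (fun y' => deriv (fun y'' => belU2 a d Re x y'' z t) y') y +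
           deriv (fun z' => deriv (fun z'' => belU2 a d Re x y z'' t) z') z)) ∧
    (deriv (fun s => belU3 a d Re x y z s) t =
      ν * (deriv (fun x' => deriv (fun x'' => belU3 a d Re x'' y z t) x') x +
           deriv (fun y' => deriv (fun y'' => belU3 a d Re x y'' z t) y') y +
           deriv (fun z' => deriv (fun z'' => belU3 a d Re x y z'' t) z') z)) := by
  
  refine ⟨bel_comp1 a d Re ν hRe hν x y z t, ?_, ?_⟩
  · simp only [belU2_eq]
    have h := bel_comp1 a d Re ν hRe hν y z x t
    rw [h]; ring
  · simp only [belU3_eq]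
    have h := bel_comp1 a d Re ν hRe hν z x y t
    rw [h]; ring
end

section
/- Let Ω ⊆ ℝ^D be open, T > 0, ν > 0, and let u : Ω × (0,T) → ℝ^D, p : Ω × (0,T) → ℝ, f : Ω × (0,T) → ℝ^D, ψ : Ω × (0,T) → ℝ be infinitely differentiable and satisfy ∂u/∂t + (u·∇)u = f − ∇p + νΔu and ∇·u = 0 on Ω × (0,T). Define w = u − ∇ψ and q = p + ∂ψ/∂t − νΔψ, and assume the divergence of w satisfies the heat equation ∂(∇·w)/∂t = νΔ(∇·w) on Ω × (0,T). Then q satisfies the pressure Poisson equation Δq = ∇·(f − (u·∇)u) on Ω × (0,T). -/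
/-- Partial derivative of `f : ℝⁿ → ℝ` in the `i`-th coordinate direction. -/
noncomputable def pd {n : ℕ} (i : Fin n) (f : (Fin n → ℝ) → ℝ) (x : Fin n → ℝ) : ℝ :=
  deriv (fun s : ℝ => f (Function.update x i s)) (x i)

/-- Laplacian of a scalar field `f : ℝⁿ → ℝ`. -/
noncomputable def lap {n : ℕ} (f : (Fin n → ℝ) → ℝ) (x : Fin n → ℝ) : ℝ :=
  ∑ i : Fin n, pd i (fun y => pd i f y) x

open scoped ContDiff

noncomputable def Dvv {E : Type*} [NormedAddCommGroup E] [NormedSpace ℝ E]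
    (v : E) (g : E → ℝ) (z : E) : ℝ := fderiv ℝ g z v

section Generic
variable {E : Type*} [NormedAddCommGroup E] [NormedSpace ℝ E]
variable {S : Set E} {g h : E → ℝ} {z : E} {v w : E}

lemma smooth_dv (hS : IsOpen S) (hg : ContDiffOn ℝ ∞ g S) (v : E) :
    ContDiffOn ℝ ∞ (Dvv v g) S :=
  (hg.fderiv_of_isOpen hS (le_of_eq rfl)).clm_apply contDiffOn_const

lemma smooth_diffAt {F : Type*} [NormedAddCommGroup F] [NormedSpace ℝ F] {g : E → F}
    (hS : IsOpen S) (hg : ContDiffOn ℝ ∞ g S) (hz : z ∈ S) :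
    DifferentiableAt ℝ g z :=
  (hg.contDiffAt (hS.mem_nhds hz)).differentiableAt (by simp)

lemma dv_congr (hgh : g =ᶠ[nhds z] h) (v : E) : Dvv v g z = Dvv v h z := by
  unfold Dvv; rw [hgh.fderiv_eq]

lemma dv_congr_on (hS : IsOpen S) (hz : z ∈ S) (hgh : ∀ y ∈ S, g y = h y) (v : E) :
    Dvv v g z = Dvv v h z :=
  dv_congr (Filter.eventuallyEq_of_mem (hS.mem_nhds hz) hgh) v

lemma dv_zero_on (hS : IsOpen S) (hz : z ∈ S) (hgh : ∀ y ∈ S, g y = 0) (v : E) :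
    Dvv v g z = 0 := by
  rw [dv_congr_on hS hz hgh v]; unfold Dvv
  rw [show (fun _ : E => (0:ℝ)) = fun _ : E => (0:ℝ) from rfl, fderiv_fun_const]
  simp

lemma dv_add (hg : DifferentiableAt ℝ g z) (hh : DifferentiableAt ℝ h z) (v : E) :
    Dvv v (fun y => g y + h y) z = Dvv v g z + Dvv v h z := by
  unfold Dvv; rw [fderiv_fun_add hg hh]; rfl

lemma dv_sub (hg : DifferentiableAt ℝ g z) (hh : DifferentiableAt ℝ h z) (v : E) :
    Dvv v (fun y => g y - h y) z = Dvv v g z - Dvv v h z := by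
  unfold Dvv; rw [fderiv_fun_sub hg hh]; rfl

lemma dv_neg (v : E) : Dvv v (fun y => -g y) z = -Dvv v g z := by
  unfold Dvv; rw [fderiv_fun_neg]; rfl

lemma dv_const_mul (hg : DifferentiableAt ℝ g z) (c : ℝ) (v : E) :
    Dvv v (fun y => c * g y) z = c * Dvv v g z := by
  unfold Dvv; rw [fderiv_const_mul hg c]; rfl

lemma dv_sum {ι : Type*} (s : Finset ι) (A : ι → E → ℝ)
    (hA : ∀ i ∈ s, DifferentiableAt ℝ (A i) z) (v : E) :
    Dvv v (fun y => ∑ i ∈ s, A i y) z = ∑ i ∈ s, Dvv v (A i) z := by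
  unfold Dvv; rw [fderiv_fun_sum hA]; simp

lemma dv_swap (hS : IsOpen S) (hg : ContDiffOn ℝ ∞ g S) (hz : z ∈ S) (v w : E) :
    Dvv v (Dvv w g) z = Dvv w (Dvv v g) z := by
  have hf' : ContDiffOn ℝ ∞ (fderiv ℝ g) S := hg.fderiv_of_isOpen hS (le_of_eq rfl)
  have hd : DifferentiableAt ℝ (fderiv ℝ g) z := smooth_diffAt hS hf' hz
  have hsymm : ∀ a b : E, fderiv ℝ (fderiv ℝ g) z a b = fderiv ℝ (fderiv ℝ g) z b a := by
    intro a b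
    apply second_derivative_symmetric_of_eventually (f := g) ?_ hd.hasFDerivAt
    filter_upwards [hS.mem_nhds hz] with y hy using (smooth_diffAt hS hg hy).hasFDerivAt
  have key : ∀ a : E, fderiv ℝ (fun z' => fderiv ℝ g z' a) z
      = (ContinuousLinearMap.apply ℝ ℝ a).comp (fderiv ℝ (fderiv ℝ g) z) := by
    intro a
    exact ((ContinuousLinearMap.apply ℝ ℝ a).hasFDerivAt.comp z hd.hasFDerivAt).fderiv
  show fderiv ℝ (fun z' => fderiv ℝ g z' w) z v = fderiv ℝ (fun z' => fderiv ℝ g z' v) z w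
  rw [key w, key v]
  exact hsymm v w

end Generic

section Translate

variable {n : ℕ}

lemma pd_eq_fderiv {g : (Fin n → ℝ) → ℝ} {x : Fin n → ℝ} (i : Fin n)
    (hg : DifferentiableAt ℝ g x) :
    pd i g x = fderiv ℝ g x (Pi.single i 1) := by
  have hx' : HasFDerivAt g (fderiv ℝ g x) (Function.update x i (x i)) := by
    rw [Function.update_eq_self]; exact hg.hasFDerivAt
  have h := hx'.comp_hasDerivAt (x i) (hasDerivAt_update x i (x i))
  rw [pd]
  simpa [Function.comp_def] using h.deriv

lemma pd_congr {g h : (Fin n → ℝ) → ℝ} {x : Fin n → ℝ} (i : Fin n)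
    (hgh : g =ᶠ[nhds x] h) : pd i g x = pd i h x := by
  unfold pd
  apply Filter.EventuallyEq.deriv_eq
  have hcont : Filter.Tendsto (fun s : ℝ => Function.update x i s) (nhds (x i)) (nhds x) := by
    have h := (hasDerivAt_update x i (x i)).continuousAt
    unfold ContinuousAt at h
    rw [Function.update_eq_self] at h
    exact h
  exact hgh.comp_tendsto hcont

lemma lap_congr {g h : (Fin n → ℝ) → ℝ} {x : Fin n → ℝ}
    (hgh : g =ᶠ[nhds x] h) : lap g x = lap h x := by
  unfold lap
  refine Finset.sum_congr rfl fun i _ => ?_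
  apply pd_congr
  filter_upwards [hgh.eventuallyEq_nhds] with y hy using pd_congr i hy

end Translate

section Slice

variable {n : ℕ} {S : Set ((Fin n → ℝ) × ℝ)} {G : (Fin n → ℝ) × ℝ → ℝ}
  {x : Fin n → ℝ} {t : ℝ}

/-- spatial basis direction -/
def av (i : Fin n) : (Fin n → ℝ) × ℝ := (Pi.single i 1, 0)
/-- time direction -/
def tv : (Fin n → ℝ) × ℝ := (0, 1)

lemma slice_pd (hG : DifferentiableAt ℝ G (x, t)) (i : Fin n) :
    pd i (fun y => G (y, t)) x = Dvv (av i) G (x, t) := by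
  have h1 : HasFDerivAt (fun y : Fin n → ℝ => G (y, t))
      ((fderiv ℝ G (x, t)).comp (ContinuousLinearMap.inl ℝ (Fin n → ℝ) ℝ)) x :=
    hG.hasFDerivAt.comp x (hasFDerivAt_prodMk_left x t)
  rw [pd_eq_fderiv i h1.differentiableAt, h1.fderiv]
  rfl

lemma slice_deriv (hG : DifferentiableAt ℝ G (x, t)) :
    deriv (fun s => G (x, s)) t = Dvv tv G (x, t) := by
  have h0 : HasDerivAt (fun s : ℝ => ((x, s) : (Fin n → ℝ) × ℝ)) ((0 : Fin n → ℝ), (1:ℝ)) t := by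
    simpa using (hasDerivAt_const t x).prodMk (hasDerivAt_id t)
  have h1 := hG.hasFDerivAt.comp_hasDerivAt t h0
  exact h1.deriv

variable (hS : IsOpen S) (hG : ContDiffOn ℝ ∞ G S) (hz : (x, t) ∈ S)
include hS hG hz

omit hG in
lemma slice_mem_nhds : {y : Fin n → ℝ | (y, t) ∈ S} ∈ nhds x := by
  have : IsOpen {y : Fin n → ℝ | (y, t) ∈ S} :=
    hS.preimage (Continuous.prodMk continuous_id continuous_const)
  exact this.mem_nhds hz

lemma slice_pd' (i : Fin n) :
    pd i (fun y => G (y, t)) x = Dvv (av i) G (x, t) :=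
  slice_pd (smooth_diffAt hS hG hz) i

lemma slice_pd2 (i j : Fin n) :
    pd i (fun y => pd j (fun y' => G (y', t)) y) x = Dvv (av i) (Dvv (av j) G) (x, t) := by
  have he : (fun y => pd j (fun y' => G (y', t)) y)
      =ᶠ[nhds x] fun y => Dvv (av j) G (y, t) := by
    filter_upwards [slice_mem_nhds hS hz] with y hy using
      slice_pd (smooth_diffAt hS hG hy) j
  rw [pd_congr i he]
  exact slice_pd (smooth_diffAt hS (smooth_dv hS hG (av j)) hz) i

lemma slice_lap :
    lap (fun y => G (y, t)) x = ∑ i : Fin n, Dvv (av i) (Dvv (av i) G) (x, t) := by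
  unfold lap
  exact Finset.sum_congr rfl fun i _ => slice_pd2 hS hG hz i i

end Slice

lemma aux_dvv (n : ℕ) (S : Set ((Fin n → ℝ) × ℝ)) (hS : IsOpen S) (ν : ℝ)
    (U : Fin n → ((Fin n → ℝ) × ℝ) → ℝ) (P Ψ : ((Fin n → ℝ) × ℝ) → ℝ)
    (hU : ∀ i, ContDiffOn ℝ ∞ (U i) S) (hP : ContDiffOn ℝ ∞ P S)
    (hΨ : ContDiffOn ℝ ∞ Ψ S)
    (hΦ : ∀ z ∈ S, (∑ i : Fin n, Dvv (av i) (U i) z) = 0)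
    (z₀ : (Fin n → ℝ) × ℝ) (hz₀ : z₀ ∈ S)
    (hheat : Dvv tv (fun z => ∑ d : Fin n, Dvv (av d) (Dvv (av d) Ψ) z) z₀
      = ν * ∑ i : Fin n,
          Dvv (av i) (Dvv (av i) (fun z => ∑ d : Fin n, Dvv (av d) (Dvv (av d) Ψ) z)) z₀) :
    ∑ i : Fin n, Dvv (av i) (Dvv (av i)
        (fun z => P z + Dvv tv Ψ z - ν * ∑ d : Fin n, Dvv (av d) (Dvv (av d) Ψ) z)) z₀
      = ∑ i : Fin n, Dvv (av i)
          (fun z => Dvv tv (U i) z + Dvv (av i) P z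
            - ν * ∑ d : Fin n, Dvv (av d) (Dvv (av d) (U i)) z) z₀ := by
  have hΛ : ContDiffOn ℝ ∞ (fun z => ∑ d : Fin n, Dvv (av d) (Dvv (av d) Ψ) z) S :=
    ContDiffOn.sum fun d _ => smooth_dv hS (smooth_dv hS hΨ (av d)) (av d)
  -- LHS per-i expansion
  have hL1 : ∀ i : Fin n, Dvv (av i) (Dvv (av i)
      (fun z => P z + Dvv tv Ψ z - ν * ∑ d : Fin n, Dvv (av d) (Dvv (av d) Ψ) z)) z₀
      = Dvv (av i) (Dvv (av i) P) z₀ + Dvv (av i) (Dvv (av i) (Dvv tv Ψ)) z₀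
        - ν * Dvv (av i) (Dvv (av i)
            (fun z => ∑ d : Fin n, Dvv (av d) (Dvv (av d) Ψ) z)) z₀ := by
    intro i
    have hstep : ∀ z ∈ S, Dvv (av i)
        (fun z' => P z' + Dvv tv Ψ z' - ν * ∑ d : Fin n, Dvv (av d) (Dvv (av d) Ψ) z') z
        = Dvv (av i) P z + Dvv (av i) (Dvv tv Ψ) z
          - ν * Dvv (av i) (fun z' => ∑ d : Fin n, Dvv (av d) (Dvv (av d) Ψ) z') z := by
      intro z hz
      rw [dv_sub ((smooth_diffAt hS hP hz).fun_add
            (smooth_diffAt hS (smooth_dv hS hΨ tv) hz))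
            ((smooth_diffAt hS hΛ hz).const_mul ν),
          dv_add (smooth_diffAt hS hP hz) (smooth_diffAt hS (smooth_dv hS hΨ tv) hz),
          dv_const_mul (smooth_diffAt hS hΛ hz)]
    rw [dv_congr_on hS hz₀ hstep (av i),
        dv_sub ((smooth_diffAt hS (smooth_dv hS hP (av i)) hz₀).fun_add
            (smooth_diffAt hS (smooth_dv hS (smooth_dv hS hΨ tv) (av i)) hz₀))
            ((smooth_diffAt hS (smooth_dv hS hΛ (av i)) hz₀).const_mul ν),
        dv_add (smooth_diffAt hS (smooth_dv hS hP (av i)) hz₀)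
            (smooth_diffAt hS (smooth_dv hS (smooth_dv hS hΨ tv) (av i)) hz₀),
        dv_const_mul (smooth_diffAt hS (smooth_dv hS hΛ (av i)) hz₀)]
  -- RHS per-i expansion
  have hR1 : ∀ i : Fin n, Dvv (av i)
      (fun z => Dvv tv (U i) z + Dvv (av i) P z
        - ν * ∑ d : Fin n, Dvv (av d) (Dvv (av d) (U i)) z) z₀
      = Dvv (av i) (Dvv tv (U i)) z₀ + Dvv (av i) (Dvv (av i) P) z₀
        - ν * ∑ d : Fin n, Dvv (av i) (Dvv (av d) (Dvv (av d) (U i))) z₀ := by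
    intro i
    have hM : ContDiffOn ℝ ∞ (fun z => ∑ d : Fin n, Dvv (av d) (Dvv (av d) (U i)) z) S :=
      ContDiffOn.sum fun d _ => smooth_dv hS (smooth_dv hS (hU i) (av d)) (av d)
    rw [dv_sub ((smooth_diffAt hS (smooth_dv hS (hU i) tv) hz₀).fun_add
          (smooth_diffAt hS (smooth_dv hS hP (av i)) hz₀))
          ((smooth_diffAt hS hM hz₀).const_mul ν),
        dv_add (smooth_diffAt hS (smooth_dv hS (hU i) tv) hz₀)
          (smooth_diffAt hS (smooth_dv hS hP (av i)) hz₀),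
        dv_const_mul (smooth_diffAt hS hM hz₀),
        dv_sum Finset.univ (fun d => Dvv (av d) (Dvv (av d) (U i)))
          (fun d _ => smooth_diffAt hS (smooth_dv hS (smooth_dv hS (hU i) (av d)) (av d)) hz₀)
          (av i)]
  -- mixed time derivative sum
  have hsumT : ∑ i : Fin n, Dvv (av i) (Dvv (av i) (Dvv tv Ψ)) z₀
      = Dvv tv (fun z => ∑ d : Fin n, Dvv (av d) (Dvv (av d) Ψ) z) z₀ := by
    have hswap : ∀ i : Fin n, Dvv (av i) (Dvv (av i) (Dvv tv Ψ)) z₀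
        = Dvv tv (Dvv (av i) (Dvv (av i) Ψ)) z₀ := by
      intro i
      have h1 : ∀ z ∈ S, Dvv (av i) (Dvv tv Ψ) z = Dvv tv (Dvv (av i) Ψ) z :=
        fun z hz => dv_swap hS hΨ hz (av i) tv
      rw [dv_congr_on hS hz₀ h1 (av i)]
      exact dv_swap hS (smooth_dv hS hΨ (av i)) hz₀ (av i) tv
    rw [Finset.sum_congr rfl fun i _ => hswap i]
    exact (dv_sum Finset.univ (fun d => Dvv (av d) (Dvv (av d) Ψ))
      (fun d _ => smooth_diffAt hS (smooth_dv hS (smooth_dv hS hΨ (av d)) (av d)) hz₀) tv).symm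
  -- time derivative of divergence vanishes
  have hsumA : ∑ i : Fin n, Dvv (av i) (Dvv tv (U i)) z₀ = 0 := by
    have hswap : ∀ i : Fin n, Dvv (av i) (Dvv tv (U i)) z₀
        = Dvv tv (Dvv (av i) (U i)) z₀ := fun i => dv_swap hS (hU i) hz₀ (av i) tv
    rw [Finset.sum_congr rfl fun i _ => hswap i,
      ← dv_sum Finset.univ (fun i => Dvv (av i) (U i))
        (fun i _ => smooth_diffAt hS (smooth_dv hS (hU i) (av i)) hz₀) tv]
    exact dv_zero_on hS hz₀ hΦ tv
  -- laplacian of divergence vanishes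
  have hsumB : ∑ i : Fin n, ∑ d : Fin n,
      Dvv (av i) (Dvv (av d) (Dvv (av d) (U i))) z₀ = 0 := by
    rw [Finset.sum_comm]
    apply Finset.sum_eq_zero
    intro d _
    have h1 : ∀ i : Fin n, Dvv (av i) (Dvv (av d) (Dvv (av d) (U i))) z₀
        = Dvv (av d) (Dvv (av d) (Dvv (av i) (U i))) z₀ := by
      intro i
      rw [dv_swap hS (smooth_dv hS (hU i) (av d)) hz₀ (av i) (av d)]
      have h2 : ∀ z ∈ S, Dvv (av i) (Dvv (av d) (U i)) z
          = Dvv (av d) (Dvv (av i) (U i)) z :=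
        fun z hz => dv_swap hS (hU i) hz (av i) (av d)
      exact dv_congr_on hS hz₀ h2 (av d)
    rw [Finset.sum_congr rfl fun i _ => h1 i,
      ← dv_sum Finset.univ (fun i => Dvv (av d) (Dvv (av i) (U i)))
        (fun i _ => smooth_diffAt hS (smooth_dv hS (smooth_dv hS (hU i) (av i)) (av d)) hz₀)
        (av d)]
    apply dv_zero_on hS hz₀ ?_ (av d)
    intro z hz
    rw [← dv_sum Finset.univ (fun i => Dvv (av i) (U i))
        (fun i _ => smooth_diffAt hS (smooth_dv hS (hU i) (av i)) hz) (av d)]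
    exact dv_zero_on hS hz hΦ (av d)
  rw [Finset.sum_congr rfl fun i _ => hL1 i, Finset.sum_congr rfl fun i _ => hR1 i,
      Finset.sum_sub_distrib, Finset.sum_add_distrib, ← Finset.mul_sum,
      Finset.sum_sub_distrib, Finset.sum_add_distrib, ← Finset.mul_sum,
      hsumT, hheat, hsumA, hsumB]
  ring

set_option maxHeartbeats 2000000 in
/-- If `(u, p)` solves the incompressible Navier–Stokes equations on `Ω × (0,T)`,
`w = u − ∇ψ`, `q = p + ∂ψ/∂t − νΔψ`, and `∇·w` satisfies the heat equation
`∂(∇·w)/∂t = νΔ(∇·w)`, then `q` satisfies the pressure Poisson equation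
`Δq = ∇·(f − (u·∇)u)`. -/
theorem gepup_pressure_poisson_equation
    (D : ℕ) (Ω : Set (Fin D → ℝ)) (hΩ : IsOpen Ω) (T ν : ℝ) (hT : 0 < T) (hν : 0 < ν)
    (u : (Fin D → ℝ) → ℝ → Fin D → ℝ) (p : (Fin D → ℝ) → ℝ → ℝ)
    (f : (Fin D → ℝ) → ℝ → Fin D → ℝ) (ψ : (Fin D → ℝ) → ℝ → ℝ)
    (hu : ContDiffOn ℝ (⊤ : ℕ∞) (fun pr : (Fin D → ℝ) × ℝ => u pr.1 pr.2) (Ω ×ˢ Set.Ioo 0 T))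
    (hp : ContDiffOn ℝ (⊤ : ℕ∞) (fun pr : (Fin D → ℝ) × ℝ => p pr.1 pr.2) (Ω ×ˢ Set.Ioo 0 T))
    (hf : ContDiffOn ℝ (⊤ : ℕ∞) (fun pr : (Fin D → ℝ) × ℝ => f pr.1 pr.2) (Ω ×ˢ Set.Ioo 0 T))
    (hψ : ContDiffOn ℝ (⊤ : ℕ∞) (fun pr : (Fin D → ℝ) × ℝ => ψ pr.1 pr.2) (Ω ×ˢ Set.Ioo 0 T))
    (hmom : ∀ x ∈ Ω, ∀ t ∈ Set.Ioo (0 : ℝ) T, ∀ i : Fin D,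
      deriv (fun s => u x s i) t + ∑ k : Fin D, u x t k * pd k (fun y => u y t i) x
        = f x t i - pd i (fun y => p y t) x + ν * lap (fun y => u y t i) x)
    (hdiv : ∀ x ∈ Ω, ∀ t ∈ Set.Ioo (0 : ℝ) T,
      ∑ i : Fin D, pd i (fun y => u y t i) x = 0)
    (w : (Fin D → ℝ) → ℝ → Fin D → ℝ) (q : (Fin D → ℝ) → ℝ → ℝ)
    (hw : ∀ x t i, w x t i = u x t i - pd i (fun y => ψ y t) x)
    (hq : ∀ x t, q x t = p x t + deriv (fun s => ψ x s) t - ν * lap (fun y => ψ y t) x)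
    (hheat : ∀ x ∈ Ω, ∀ t ∈ Set.Ioo (0 : ℝ) T,
      deriv (fun s => ∑ i : Fin D, pd i (fun y => w y s i) x) t
        = ν * lap (fun y => ∑ i : Fin D, pd i (fun z => w z t i) y) x) :
    ∀ x ∈ Ω, ∀ t ∈ Set.Ioo (0 : ℝ) T,
      lap (fun y => q y t) x
        = ∑ i : Fin D,
            pd i (fun y => f y t i - ∑ k : Fin D, u y t k * pd k (fun z => u z t i) y) x := by
  intro x hx t ht
  have hS : IsOpen (Ω ×ˢ Set.Ioo 0 T) := hΩ.prod isOpen_Ioo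
  have hz₀ : ((x, t) : (Fin D → ℝ) × ℝ) ∈ Ω ×ˢ Set.Ioo 0 T := ⟨hx, ht⟩
  have hU : ∀ i : Fin D, ContDiffOn ℝ ∞ (fun z' : (Fin D → ℝ) × ℝ => u z'.1 z'.2 i) (Ω ×ˢ Set.Ioo 0 T) := by
    intro i
    exact (ContinuousLinearMap.proj (R := ℝ) (φ := fun _ : Fin D => ℝ) i).contDiff.comp_contDiffOn
      (hu.of_le (by simp))
  have hP : ContDiffOn ℝ ∞ (fun z' : (Fin D → ℝ) × ℝ => p z'.1 z'.2) (Ω ×ˢ Set.Ioo 0 T) := hp.of_le (by simp)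
  have hΨ : ContDiffOn ℝ ∞ (fun z' : (Fin D → ℝ) × ℝ => ψ z'.1 z'.2) (Ω ×ˢ Set.Ioo 0 T) := hψ.of_le (by simp)
  have hΛ : ContDiffOn ℝ ∞ (fun z : (Fin D → ℝ) × ℝ => ∑ d : Fin D, Dvv (av d) (Dvv (av d) (fun z' : (Fin D → ℝ) × ℝ => ψ z'.1 z'.2)) z) (Ω ×ˢ Set.Ioo 0 T) :=
    ContDiffOn.sum fun d _ => smooth_dv hS (smooth_dv hS hΨ (av d)) (av d)
  have hΦ : ∀ z ∈ Ω ×ˢ Set.Ioo 0 T,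
      (∑ i : Fin D, Dvv (av i) (fun z' : (Fin D → ℝ) × ℝ => u z'.1 z'.2 i) z) = 0 := by
    rintro ⟨y, s⟩ hz
    calc ∑ i : Fin D, Dvv (av i) (fun z' : (Fin D → ℝ) × ℝ => u z'.1 z'.2 i) (y, s)
        = ∑ i : Fin D, pd i (fun y' => u y' s i) y :=
          Finset.sum_congr rfl fun i _ => (slice_pd' hS (hU i) hz i).symm
      _ = 0 := hdiv y hz.1 s hz.2
  have hdivw : ∀ y' ∈ Ω, ∀ s ∈ Set.Ioo (0:ℝ) T,
      (∑ i : Fin D, pd i (fun y'' => w y'' s i) y')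
        = -(∑ i : Fin D, Dvv (av i) (Dvv (av i) (fun z' : (Fin D → ℝ) × ℝ => ψ z'.1 z'.2)) (y', s)) := by
    intro y' hy' s hs
    have hz : ((y', s) : (Fin D → ℝ) × ℝ) ∈ Ω ×ˢ Set.Ioo 0 T := ⟨hy', hs⟩
    have hterm : ∀ i : Fin D, pd i (fun y'' => w y'' s i) y'
        = Dvv (av i) (fun z' : (Fin D → ℝ) × ℝ => u z'.1 z'.2 i) (y', s) - Dvv (av i) (Dvv (av i) (fun z' : (Fin D → ℝ) × ℝ => ψ z'.1 z'.2)) (y', s) := by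
      intro i
      have hGi : ContDiffOn ℝ ∞
          (fun z' : (Fin D → ℝ) × ℝ => u z'.1 z'.2 i - Dvv (av i) (fun z' : (Fin D → ℝ) × ℝ => ψ z'.1 z'.2) z')
          (Ω ×ˢ Set.Ioo 0 T) :=
        (hU i).sub (smooth_dv hS hΨ (av i))
      have he : (fun y'' => w y'' s i) =ᶠ[nhds y']
          (fun y'' => u y'' s i - Dvv (av i) (fun z' : (Fin D → ℝ) × ℝ => ψ z'.1 z'.2) (y'', s)) := by
        filter_upwards [slice_mem_nhds hS hz] with y2 hy2
        rw [hw y2 s i, slice_pd' hS hΨ hy2 i]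
      calc pd i (fun y'' => w y'' s i) y'
          = pd i (fun y'' => u y'' s i - Dvv (av i) (fun z' : (Fin D → ℝ) × ℝ => ψ z'.1 z'.2) (y'', s)) y' := pd_congr i he
        _ = Dvv (av i)
              (fun z' : (Fin D → ℝ) × ℝ => u z'.1 z'.2 i - Dvv (av i) (fun z' : (Fin D → ℝ) × ℝ => ψ z'.1 z'.2) z') (y', s) :=
            slice_pd' hS hGi hz i
        _ = _ :=
            dv_sub (smooth_diffAt hS (hU i) hz)
              (smooth_diffAt hS (smooth_dv hS hΨ (av i)) hz) (av i)
    rw [Finset.sum_congr rfl fun i _ => hterm i, Finset.sum_sub_distrib, hΦ (y', s) hz,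
      zero_sub]
  have hheat' : Dvv tv (fun z : (Fin D → ℝ) × ℝ => ∑ d : Fin D, Dvv (av d) (Dvv (av d) (fun z' : (Fin D → ℝ) × ℝ => ψ z'.1 z'.2)) z) (x, t)
      = ν * ∑ i : Fin D, Dvv (av i) (Dvv (av i) (fun z : (Fin D → ℝ) × ℝ => ∑ d : Fin D, Dvv (av d) (Dvv (av d) (fun z' : (Fin D → ℝ) × ℝ => ψ z'.1 z'.2)) z)) (x, t) := by
    have hL : deriv (fun s => ∑ i : Fin D, pd i (fun y => w y s i) x) t
        = -(Dvv tv (fun z : (Fin D → ℝ) × ℝ => ∑ d : Fin D, Dvv (av d) (Dvv (av d) (fun z' : (Fin D → ℝ) × ℝ => ψ z'.1 z'.2)) z) (x, t)) := by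
      have he : (fun s => ∑ i : Fin D, pd i (fun y => w y s i) x)
          =ᶠ[nhds t] (fun s => -((fun z : (Fin D → ℝ) × ℝ => ∑ d : Fin D, Dvv (av d) (Dvv (av d) (fun z' : (Fin D → ℝ) × ℝ => ψ z'.1 z'.2)) z) (x, s))) := by
        filter_upwards [isOpen_Ioo.mem_nhds ht] with s hs
        exact hdivw x hx s hs
      rw [he.deriv_eq]
      calc deriv (fun s => -((fun z : (Fin D → ℝ) × ℝ => ∑ d : Fin D, Dvv (av d) (Dvv (av d) (fun z' : (Fin D → ℝ) × ℝ => ψ z'.1 z'.2)) z) (x, s))) t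
          = Dvv tv (fun z : (Fin D → ℝ) × ℝ => -((fun z : (Fin D → ℝ) × ℝ => ∑ d : Fin D, Dvv (av d) (Dvv (av d) (fun z' : (Fin D → ℝ) × ℝ => ψ z'.1 z'.2)) z) z)) (x, t) :=
            slice_deriv (smooth_diffAt hS hΛ.neg hz₀)
        _ = -(Dvv tv (fun z : (Fin D → ℝ) × ℝ => ∑ d : Fin D, Dvv (av d) (Dvv (av d) (fun z' : (Fin D → ℝ) × ℝ => ψ z'.1 z'.2)) z) (x, t)) := dv_neg tv
    have hR : lap (fun y => ∑ i : Fin D, pd i (fun z => w z t i) y) x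
        = -(∑ i : Fin D, Dvv (av i) (Dvv (av i) (fun z : (Fin D → ℝ) × ℝ => ∑ d : Fin D, Dvv (av d) (Dvv (av d) (fun z' : (Fin D → ℝ) × ℝ => ψ z'.1 z'.2)) z)) (x, t)) := by
      have he : (fun y => ∑ i : Fin D, pd i (fun z => w z t i) y)
          =ᶠ[nhds x] (fun y => -((fun z : (Fin D → ℝ) × ℝ => ∑ d : Fin D, Dvv (av d) (Dvv (av d) (fun z' : (Fin D → ℝ) × ℝ => ψ z'.1 z'.2)) z) (y, t))) := by
        filter_upwards [hΩ.mem_nhds hx] with y hy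
        exact hdivw y hy t ht
      rw [lap_congr he]
      calc lap (fun y => -((fun z : (Fin D → ℝ) × ℝ => ∑ d : Fin D, Dvv (av d) (Dvv (av d) (fun z' : (Fin D → ℝ) × ℝ => ψ z'.1 z'.2)) z) (y, t))) x
          = ∑ i : Fin D,
              Dvv (av i) (Dvv (av i) (fun z : (Fin D → ℝ) × ℝ => -((fun z : (Fin D → ℝ) × ℝ => ∑ d : Fin D, Dvv (av d) (Dvv (av d) (fun z' : (Fin D → ℝ) × ℝ => ψ z'.1 z'.2)) z) z))) (x, t) :=
            slice_lap hS hΛ.neg hz₀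
        _ = ∑ i : Fin D, -(Dvv (av i) (Dvv (av i) (fun z : (Fin D → ℝ) × ℝ => ∑ d : Fin D, Dvv (av d) (Dvv (av d) (fun z' : (Fin D → ℝ) × ℝ => ψ z'.1 z'.2)) z)) (x, t)) := by
            refine Finset.sum_congr rfl fun i _ => ?_
            have h1 : Dvv (av i) (fun z : (Fin D → ℝ) × ℝ => -((fun z : (Fin D → ℝ) × ℝ => ∑ d : Fin D, Dvv (av d) (Dvv (av d) (fun z' : (Fin D → ℝ) × ℝ => ψ z'.1 z'.2)) z) z))
                = fun z : (Fin D → ℝ) × ℝ => -(Dvv (av i) (fun z : (Fin D → ℝ) × ℝ => ∑ d : Fin D, Dvv (av d) (Dvv (av d) (fun z' : (Fin D → ℝ) × ℝ => ψ z'.1 z'.2)) z) z) :=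
              funext fun z => dv_neg (av i)
            rw [h1]
            exact dv_neg (av i)
        _ = -(∑ i : Fin D, Dvv (av i) (Dvv (av i) (fun z : (Fin D → ℝ) × ℝ => ∑ d : Fin D, Dvv (av d) (Dvv (av d) (fun z' : (Fin D → ℝ) × ℝ => ψ z'.1 z'.2)) z)) (x, t)) := by
            rw [Finset.sum_neg_distrib]
    have h0 := hheat x hx t ht
    rw [hL, hR] at h0
    have h1 : Dvv tv (fun z : (Fin D → ℝ) × ℝ => ∑ d : Fin D, Dvv (av d) (Dvv (av d) (fun z' : (Fin D → ℝ) × ℝ => ψ z'.1 z'.2)) z) (x, t)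
        = ν * ∑ i : Fin D, Dvv (av i) (Dvv (av i) (fun z : (Fin D → ℝ) × ℝ => ∑ d : Fin D, Dvv (av d) (Dvv (av d) (fun z' : (Fin D → ℝ) × ℝ => ψ z'.1 z'.2)) z)) (x, t) := by
      linarith
    exact h1
  -- translate the goal
  have hQ : ContDiffOn ℝ ∞ (fun z : (Fin D → ℝ) × ℝ => p z.1 z.2 + Dvv tv (fun z' : (Fin D → ℝ) × ℝ => ψ z'.1 z'.2) z - ν * ∑ d : Fin D, Dvv (av d) (Dvv (av d) (fun z' : (Fin D → ℝ) × ℝ => ψ z'.1 z'.2)) z) (Ω ×ˢ Set.Ioo 0 T) :=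
    (hP.add (smooth_dv hS hΨ tv)).sub (contDiffOn_const.mul hΛ)
  have heq : (fun y => q y t) =ᶠ[nhds x] (fun y => (fun z : (Fin D → ℝ) × ℝ => p z.1 z.2 + Dvv tv (fun z' : (Fin D → ℝ) × ℝ => ψ z'.1 z'.2) z - ν * ∑ d : Fin D, Dvv (av d) (Dvv (av d) (fun z' : (Fin D → ℝ) × ℝ => ψ z'.1 z'.2)) z) (y, t)) := by
    filter_upwards [hΩ.mem_nhds hx] with y hy
    have e1 : deriv (fun s => ψ y s) t = Dvv tv (fun z' : (Fin D → ℝ) × ℝ => ψ z'.1 z'.2) (y, t) :=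
      slice_deriv (smooth_diffAt hS hΨ ⟨hy, ht⟩)
    have e2 : lap (fun y' => ψ y' t) y
        = ∑ d : Fin D, Dvv (av d) (Dvv (av d) (fun z' : (Fin D → ℝ) × ℝ => ψ z'.1 z'.2)) (y, t) :=
      slice_lap hS hΨ ⟨hy, ht⟩
    rw [hq y t, e1, e2]
  have hr : ∀ i : Fin D,
      pd i (fun y => f y t i - ∑ k : Fin D, u y t k * pd k (fun z => u z t i) y) x
        = Dvv (av i) (fun z : (Fin D → ℝ) × ℝ => Dvv tv (fun z' : (Fin D → ℝ) × ℝ => u z'.1 z'.2 i) z + Dvv (av i) (fun z' : (Fin D → ℝ) × ℝ => p z'.1 z'.2) z - ν * ∑ d : Fin D, Dvv (av d) (Dvv (av d) (fun z' : (Fin D → ℝ) × ℝ => u z'.1 z'.2 i)) z) (x, t) := by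
    intro i
    have hM : ContDiffOn ℝ ∞
        (fun z : (Fin D → ℝ) × ℝ => ∑ d : Fin D, Dvv (av d) (Dvv (av d) (fun z' : (Fin D → ℝ) × ℝ => u z'.1 z'.2 i)) z)
        (Ω ×ˢ Set.Ioo 0 T) :=
      ContDiffOn.sum fun d _ => smooth_dv hS (smooth_dv hS (hU i) (av d)) (av d)
    have hGb : ContDiffOn ℝ ∞ (fun z : (Fin D → ℝ) × ℝ => Dvv tv (fun z' : (Fin D → ℝ) × ℝ => u z'.1 z'.2 i) z + Dvv (av i) (fun z' : (Fin D → ℝ) × ℝ => p z'.1 z'.2) z - ν * ∑ d : Fin D, Dvv (av d) (Dvv (av d) (fun z' : (Fin D → ℝ) × ℝ => u z'.1 z'.2 i)) z) (Ω ×ˢ Set.Ioo 0 T) :=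
      ((smooth_dv hS (hU i) tv).add (smooth_dv hS hP (av i))).sub
        (contDiffOn_const.mul hM)
    have he : (fun y => f y t i - ∑ k : Fin D, u y t k * pd k (fun z => u z t i) y)
        =ᶠ[nhds x] (fun y => (fun z : (Fin D → ℝ) × ℝ => Dvv tv (fun z' : (Fin D → ℝ) × ℝ => u z'.1 z'.2 i) z + Dvv (av i) (fun z' : (Fin D → ℝ) × ℝ => p z'.1 z'.2) z - ν * ∑ d : Fin D, Dvv (av d) (Dvv (av d) (fun z' : (Fin D → ℝ) × ℝ => u z'.1 z'.2 i)) z) (y, t)) := by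
      filter_upwards [hΩ.mem_nhds hx] with y hy
      have hm := hmom y hy t ht i
      have e1 : deriv (fun s => u y s i) t = Dvv tv (fun z' : (Fin D → ℝ) × ℝ => u z'.1 z'.2 i) (y, t) :=
        slice_deriv (smooth_diffAt hS (hU i) ⟨hy, ht⟩)
      have e2 : pd i (fun y' => p y' t) y = Dvv (av i) (fun z' : (Fin D → ℝ) × ℝ => p z'.1 z'.2) (y, t) :=
        slice_pd' hS hP ⟨hy, ht⟩ i
      have e3 : lap (fun y' => u y' t i) y
          = ∑ d : Fin D, Dvv (av d) (Dvv (av d) (fun z' : (Fin D → ℝ) × ℝ => u z'.1 z'.2 i)) (y, t) :=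
        slice_lap hS (hU i) ⟨hy, ht⟩
      have hre : f y t i - ∑ k : Fin D, u y t k * pd k (fun z => u z t i) y
          = deriv (fun s => u y s i) t + pd i (fun y' => p y' t) y
            - ν * lap (fun y' => u y' t i) y := by linarith
      rw [hre, e1, e2, e3]
    rw [pd_congr i he]
    exact slice_pd' hS hGb hz₀ i
  rw [lap_congr heq, Finset.sum_congr rfl fun i _ => hr i,
    slice_lap hS hQ hz₀]
  exact aux_dvv D (Ω ×ˢ Set.Ioo 0 T) hS ν (fun i => (fun z' : (Fin D → ℝ) × ℝ => u z'.1 z'.2 i)) (fun z' : (Fin D → ℝ) × ℝ => p z'.1 z'.2) (fun z' : (Fin D → ℝ) × ℝ => ψ z'.1 z'.2)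
    hU hP hΨ hΦ (x, t) hz₀ hheat'
end

section
/- Let Ω ⊆ ℝ^D be open, ν > 0, Δt > 0, and let uⁿ, u*, u^{n+1}, N : Ω → ℝ^D and q, p, φ : Ω → ℝ be infinitely differentiable and satisfy: (i) (u* − uⁿ)/Δt + ∇q = N + (ν/2)Δ(u* + uⁿ); (ii) (u^{n+1} − uⁿ)/Δt + ∇p = N + (ν/2)Δ(u^{n+1} + uⁿ); (iii) u* = u^{n+1} + Δt ∇φ. Then the exact pressure-update formula holds: ∇p = ∇q + ∇φ − (νΔt/2) Δ(∇φ) on Ω. -/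
open Filter Topology

noncomputable def pdf' {n : ℕ} (i : Fin n) (f : (Fin n → ℝ) → ℝ) (x : Fin n → ℝ) : ℝ :=
  fderiv ℝ f x (Pi.single i 1)

lemma pd_eq_pdf' {n : ℕ} (i : Fin n) (f : (Fin n → ℝ) → ℝ) (x : Fin n → ℝ)
    (hf : DifferentiableAt ℝ f x) : pd i f x = pdf' i f x := by
  have hf' : HasFDerivAt f (fderiv ℝ f x) (Function.update x i (x i)) := by
    rw [Function.update_eq_self]; exact hf.hasFDerivAt
  have h := hf'.comp_hasDerivAt (x i) (hasDerivAt_update x i (x i))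
  simpa [pd, pdf', Function.comp_def] using h.deriv

lemma pd_congr_nhds {n : ℕ} (i : Fin n) {f g : (Fin n → ℝ) → ℝ} {x : Fin n → ℝ}
    (h : f =ᶠ[𝓝 x] g) : pd i f x = pd i g x := by
  apply Filter.EventuallyEq.deriv_eq
  have hc : ContinuousAt (fun s : ℝ => Function.update x i s) (x i) :=
    (hasDerivAt_update x i (x i)).continuousAt
  have ht : Tendsto (fun s : ℝ => Function.update x i s) (𝓝 (x i)) (𝓝 x) := by
    simpa [Function.update_eq_self] using hc.tendsto
  exact h.comp_tendsto ht

lemma pdf'_congr_nhds {n : ℕ} (i : Fin n) {f g : (Fin n → ℝ) → ℝ} {x : Fin n → ℝ}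
    (h : f =ᶠ[𝓝 x] g) : pdf' i f x = pdf' i g x := by
  unfold pdf'; rw [h.fderiv_eq]

lemma pd_add_smul {n : ℕ} (i : Fin n) {f g : (Fin n → ℝ) → ℝ} {x : Fin n → ℝ} (c : ℝ)
    (hf : DifferentiableAt ℝ f x) (hg : DifferentiableAt ℝ g x) :
    pd i (fun y => f y + c * g y) x = pd i f x + c * pd i g x := by
  rw [pd_eq_pdf' _ (fun y => f y + c * g y) _ (hf.add ((hg.const_mul c))), pd_eq_pdf' _ _ _ hf, pd_eq_pdf' _ _ _ hg]
  unfold pdf'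
  rw [fderiv_fun_add hf (hg.const_mul c), fderiv_const_mul hg c]
  simp

lemma pdf'_add_smul {n : ℕ} (i : Fin n) {f g : (Fin n → ℝ) → ℝ} {x : Fin n → ℝ} (c : ℝ)
    (hf : DifferentiableAt ℝ f x) (hg : DifferentiableAt ℝ g x) :
    pdf' i (fun y => f y + c * g y) x = pdf' i f x + c * pdf' i g x := by
  unfold pdf'
  rw [fderiv_fun_add hf (hg.const_mul c), fderiv_const_mul hg c]
  simp

lemma contDiffOn_pdf' {n : ℕ} (i : Fin n) {f : (Fin n → ℝ) → ℝ} {Ω : Set (Fin n → ℝ)}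
    (hΩ : IsOpen Ω) (hf : ContDiffOn ℝ (⊤ : ℕ∞) f Ω) : ContDiffOn ℝ (⊤ : ℕ∞) (pdf' i f) Ω := by
  have h : ContDiffOn ℝ (⊤ : ℕ∞) (fun x => fderiv ℝ f x) Ω := hf.fderiv_of_isOpen hΩ (by simp)
  exact (ContinuousLinearMap.apply ℝ ℝ (Pi.single i 1)).contDiff.comp_contDiffOn h

open Filter Topology in
lemma diffAt_of_contDiffOn {n : ℕ} {Ω : Set (Fin n → ℝ)} (hΩ : IsOpen Ω)
    {f : (Fin n → ℝ) → ℝ} (hf : ContDiffOn ℝ (⊤ : ℕ∞) f Ω) {y : Fin n → ℝ} (hy : y ∈ Ω) :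
    DifferentiableAt ℝ f y :=
  (hf.contDiffAt (hΩ.mem_nhds hy)).differentiableAt (by simp)

open Filter Topology in
lemma pd2_congr {n : ℕ} {Ω : Set (Fin n → ℝ)} (hΩ : IsOpen Ω)
    {f g : (Fin n → ℝ) → ℝ} (h : ∀ y ∈ Ω, f y = g y) {x : Fin n → ℝ} (hx : x ∈ Ω)
    (j : Fin n) :
    pd j (fun y => pd j f y) x = pd j (fun y => pd j g y) x := by
  apply pd_congr_nhds
  filter_upwards [hΩ.mem_nhds hx] with y hy
  exact pd_congr_nhds j (Filter.eventuallyEq_of_mem (hΩ.mem_nhds hy) h)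

open Filter Topology in
lemma pd2_key {n : ℕ} {Ω : Set (Fin n → ℝ)} (hΩ : IsOpen Ω) (c : ℝ)
    {A B G : (Fin n → ℝ) → ℝ}
    (hA : ContDiffOn ℝ (⊤ : ℕ∞) A Ω) (hB : ContDiffOn ℝ (⊤ : ℕ∞) B Ω) (hG : ContDiffOn ℝ (⊤ : ℕ∞) G Ω)
    (hAB : ∀ y ∈ Ω, A y = B y + c * G y) {x : Fin n → ℝ} (hx : x ∈ Ω) (j : Fin n) :
    pd j (fun y => pd j A y) x
      = pd j (fun y => pd j B y) x + c * pd j (fun y => pd j G y) x := by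
  have hBd := contDiffOn_pdf' j hΩ hB
  have hGd := contDiffOn_pdf' j hΩ hG
  have step1 : ∀ y ∈ Ω, pd j A y = pdf' j B y + c * pdf' j G y := by
    intro y hy
    have h1 : pd j A y = pdf' j A y :=
      pd_eq_pdf' j A y (diffAt_of_contDiffOn hΩ hA hy)
    have h2 : pdf' j A y = pdf' j (fun z => B z + c * G z) y :=
      pdf'_congr_nhds j (Filter.eventuallyEq_of_mem (hΩ.mem_nhds hy) hAB)
    rw [h1, h2, pdf'_add_smul j c (diffAt_of_contDiffOn hΩ hB hy)
      (diffAt_of_contDiffOn hΩ hG hy)]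
  have step2 : pd j (fun y => pd j A y) x
      = pd j (fun y => pdf' j B y + c * pdf' j G y) x :=
    pd_congr_nhds j (Filter.eventuallyEq_of_mem (hΩ.mem_nhds hx) step1)
  rw [step2, pd_add_smul j c (diffAt_of_contDiffOn hΩ hBd hx)
    (diffAt_of_contDiffOn hΩ hGd hx)]
  have hb : pd j (fun y => pd j B y) x = pd j (pdf' j B) x :=
    pd_congr_nhds j (Filter.eventuallyEq_of_mem (hΩ.mem_nhds hx)
      (fun y hy => pd_eq_pdf' j B y (diffAt_of_contDiffOn hΩ hB hy)))
  have hg : pd j (fun y => pd j G y) x = pd j (pdf' j G) x :=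
    pd_congr_nhds j (Filter.eventuallyEq_of_mem (hΩ.mem_nhds hx)
      (fun y hy => pd_eq_pdf' j G y (diffAt_of_contDiffOn hΩ hG hy)))
  rw [hb, hg]

open Filter Topology in
lemma lap_key {n : ℕ} {Ω : Set (Fin n → ℝ)} (hΩ : IsOpen Ω) (c : ℝ)
    {A B G : (Fin n → ℝ) → ℝ}
    (hA : ContDiffOn ℝ (⊤ : ℕ∞) A Ω) (hB : ContDiffOn ℝ (⊤ : ℕ∞) B Ω) (hG : ContDiffOn ℝ (⊤ : ℕ∞) G Ω)
    (hAB : ∀ y ∈ Ω, A y = B y + c * G y) {x : Fin n → ℝ} (hx : x ∈ Ω) :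
    lap A x = lap B x + c * lap G x := by
  simp only [lap, Finset.mul_sum, ← Finset.sum_add_distrib]
  exact Finset.sum_congr rfl fun j _ => pd2_key hΩ c hA hB hG hAB hx j


/-- The observation of Brown, Cortez, and Minion: in a second-order
fractional-step projection method based on the trapezoidal rule, the exact
pressure-update formula is `∇p = ∇q + ∇φ − (νΔt/2)Δ(∇φ)`. -/
theorem exact_pressure_update_formula
    (D : ℕ) (Ω : Set (Fin D → ℝ)) (hΩ : IsOpen Ω) (ν Δt : ℝ) (hν : 0 < ν) (hΔt : 0 < Δt)
    (un ustar un1 N : (Fin D → ℝ) → Fin D → ℝ)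
    (q p φ : (Fin D → ℝ) → ℝ)
    (hun : ContDiffOn ℝ (⊤ : ℕ∞) un Ω) (hustar : ContDiffOn ℝ (⊤ : ℕ∞) ustar Ω)
    (hun1 : ContDiffOn ℝ (⊤ : ℕ∞) un1 Ω) (hN : ContDiffOn ℝ (⊤ : ℕ∞) N Ω)
    (hqs : ContDiffOn ℝ (⊤ : ℕ∞) q Ω) (hps : ContDiffOn ℝ (⊤ : ℕ∞) p Ω)
    (hφs : ContDiffOn ℝ (⊤ : ℕ∞) φ Ω)
    (h1 : ∀ x ∈ Ω, ∀ i : Fin D,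
      (ustar x i - un x i) / Δt + pd i q x
        = N x i + ν / 2 * lap (fun y => ustar y i + un y i) x)
    (h2 : ∀ x ∈ Ω, ∀ i : Fin D,
      (un1 x i - un x i) / Δt + pd i p x
        = N x i + ν / 2 * lap (fun y => un1 y i + un y i) x)
    (h3 : ∀ x ∈ Ω, ∀ i : Fin D, ustar x i = un1 x i + Δt * pd i φ x) :
    ∀ x ∈ Ω, ∀ i : Fin D,
      pd i p x = pd i q x + pd i φ x - ν * Δt / 2 * lap (fun y => pd i φ y) x := by
  intro x hx i
  have hC : ∀ (v : (Fin D → ℝ) → Fin D → ℝ), ContDiffOn ℝ (⊤ : ℕ∞) v Ω →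
      ContDiffOn ℝ (⊤ : ℕ∞) (fun y => v y i) Ω := fun v hv => by
    simpa [Function.comp_def] using
      (ContinuousLinearMap.proj (R := ℝ) (φ := fun _ : Fin D => ℝ) i).contDiff.comp_contDiffOn hv
  have hφd : ∀ y ∈ Ω, DifferentiableAt ℝ φ y := fun y hy =>
    diffAt_of_contDiffOn hΩ hφs hy
  have hGs : ContDiffOn ℝ (⊤ : ℕ∞) (pdf' i φ) Ω := contDiffOn_pdf' i hΩ hφs
  have hAB : ∀ y ∈ Ω,
      (ustar y i + un y i) = (un1 y i + un y i) + Δt * pdf' i φ y := by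
    intro y hy
    have h := h3 y hy i
    have h' := pd_eq_pdf' i φ y (hφd y hy)
    rw [h, ← h']; ring
  have hlapAB : lap (fun y => ustar y i + un y i) x
      = lap (fun y => un1 y i + un y i) x + Δt * lap (pdf' i φ) x :=
    lap_key hΩ Δt ((hC ustar hustar).add (hC un hun))
      ((hC un1 hun1).add (hC un hun)) hGs hAB hx
  have hlapF : lap (fun y => pd i φ y) x = lap (pdf' i φ) x := by
    simp only [lap]
    exact Finset.sum_congr rfl fun j _ =>
      pd2_congr hΩ (fun y hy => pd_eq_pdf' i φ y (hφd y hy)) hx j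
  have e1 := h1 x hx i
  have e2 := h2 x hx i
  have e3 : (ustar x i - un1 x i) / Δt = pd i φ x := by
    rw [h3 x hx i]; field_simp; ring
  rw [hlapF]
  linear_combination (e2 - e1) + e3 - ν / 2 * hlapAB
end
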